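/- The integral ∫_0^{π/2} θ/sin θ dθ equals 2G, where G = Σ_{n=0}^∞ (-1)^n/(2n+1)^2 is Catalan's constant. -/

import Mathlib

/-!
The substitution θ = 2 arctan t, for which dθ = 2 dt / (1 + t²) and sin θ = 2t / (1 + t²), turns
the integral into 2 ∫₀¹ arctan t / t dt. Expanding arctan t / t = Σ (-1)ⁿ t²ⁿ / (2n + 1) and
integrating term by term gives Σ (-1)ⁿ / (2n + 1)²; the interchange is legitimate because the
integrals of the absolute values of the terms, 1 / (2n + 1)², are summable.
-/

open Real MeasureTheory Set intervalIntegral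

lemma div_sin_eq_inv_sinc {θ : ℝ} (hθ : θ ≠ 0) : θ / sin θ = (sinc θ)⁻¹ := by
  rw [sinc_of_ne_zero hθ, inv_div]

lemma sinc_pos_of_abs_lt_pi {θ : ℝ} (hθ : |θ| < π) : 0 < sinc θ := by
  wlog h₀ : 0 ≤ θ generalizing θ
  · simpa [sinc_neg] using this (θ := -θ) (by rwa [abs_neg]) (by linarith)
  rcases h₀.eq_or_lt with rfl | h₀
  · simp
  rw [abs_of_pos h₀] at hθ
  rw [sinc_of_ne_zero h₀.ne']
  exact div_pos (sin_pos_of_pos_of_lt_pi h₀ hθ) h₀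

lemma sin_two_mul_arctan (t : ℝ) : sin (2 * arctan t) = 2 * t / (1 + t ^ 2) := by
  rw [sin_two_mul, sin_arctan, cos_arctan]
  field_simp
  rw [sq_sqrt (by positivity)]

lemma abs_two_mul_arctan_lt_pi (t : ℝ) : |2 * arctan t| < π := by
  rw [abs_lt]
  constructor <;> linarith [neg_pi_div_two_lt_arctan t, arctan_lt_pi_div_two t]

lemma integral_div_sin_eq_integral_arctan_div :
    ∫ θ in (0:ℝ)..π/2, θ / sin θ = ∫ t in (0:ℝ)..1, 2 * (arctan t / t) := by
  -- `θ / sin θ` takes the junk value `0` at `θ = 0`; the substitution is done on its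
  -- continuous version `(sinc θ)⁻¹`, which agrees with it off `0`.
  have hsubst := integral_comp_mul_deriv' (a := 0) (b := 1) (f := fun t => 2 * arctan t)
    (f' := fun t => 2 / (1 + t ^ 2)) (g := fun θ => (sinc θ)⁻¹)
    (fun t _ => by simpa [div_eq_mul_inv] using (hasDerivAt_arctan t).const_mul 2)
    (continuous_const.div (by fun_prop) fun t => by positivity).continuousOn
    (continuous_sinc.continuousOn.inv₀ <| by
      rintro _ ⟨t, -, rfl⟩
      exact (sinc_pos_of_abs_lt_pi (abs_two_mul_arctan_lt_pi t)).ne')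
  rw [arctan_zero, mul_zero, arctan_one, show 2 * (π / 4) = π / 2 by ring] at hsubst
  rw [integral_congr_Ioo_of_le (by positivity) fun θ hθ => div_sin_eq_inv_sinc hθ.1.ne',
    ← hsubst]
  refine integral_congr_Ioo_of_le zero_le_one fun t ht => ?_
  have harctan : 2 * arctan t ≠ 0 := by simp [ht.1.ne']
  simp only [Function.comp_apply, sinc_of_ne_zero harctan, inv_div, sin_two_mul_arctan]
  field_simp

lemma hasSum_arctan_div_self {t : ℝ} (ht : |t| < 1) (h₀ : t ≠ 0) :
    HasSum (fun n : ℕ => (-1) ^ n / (2 * n + 1) * t ^ (2 * n)) (arctan t / t) := by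
  have h : (fun n : ℕ => (-1) ^ n * t ^ (2 * n + 1) / ↑(2 * n + 1) / t) =
      fun n : ℕ => (-1) ^ n / (2 * n + 1) * t ^ (2 * n) := by
    funext n
    push_cast
    field_simp
    ring
  simpa only [h] using (Real.hasSum_arctan ht).div_const t

lemma integral_tsum_mul_pow {c : ℕ → ℝ} (e : ℕ → ℕ)
    (hc : Summable fun n => |c n| / (e n + 1)) :
    ∫ t in (0:ℝ)..1, ∑' n, c n * t ^ e n = ∑' n, c n / (e n + 1) := by
  have integral_mul_pow (a : ℝ) (k : ℕ) : ∫ t in (0:ℝ)..1, a * t ^ k = a / (k + 1) := by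
    simp [integral_pow, div_eq_mul_inv]
  have hint (n : ℕ) : Integrable (fun t : ℝ => c n * t ^ e n) (volume.restrict (Ioc 0 1)) :=
    (continuous_const.mul (continuous_pow _)).integrableOn_Ioc
  have hnorm (n : ℕ) : ∫ t in Ioc (0:ℝ) 1, ‖c n * t ^ e n‖ = |c n| / (e n + 1) := by
    rw [← integral_mul_pow, integral_of_le zero_le_one]
    refine setIntegral_congr_fun measurableSet_Ioc fun t ht => ?_
    simp [abs_of_pos ht.1]
  rw [integral_of_le zero_le_one, ← integral_tsum_of_summable_integral_norm hint
    (by simpa only [hnorm] using hc)]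
  simp only [← integral_of_le zero_le_one, integral_mul_pow]

lemma summable_one_div_two_mul_add_one_sq :
    Summable fun n : ℕ => 1 / (2 * (n : ℝ) + 1) ^ 2 := by
  have := (Real.summable_one_div_nat_pow.2 one_lt_two).comp_injective
    (i := fun n : ℕ => 2 * n + 1) (fun m n h => by simpa using h)
  simpa [Function.comp_def] using this

lemma integral_arctan_div_self :
    ∫ t in (0:ℝ)..1, arctan t / t = ∑' n : ℕ, (-1:ℝ) ^ n / (2 * (n:ℝ) + 1) ^ 2 := by
  rw [integral_congr_Ioo_of_le zero_le_one fun t ht =>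
    (hasSum_arctan_div_self (by rw [abs_of_pos ht.1]; exact ht.2) ht.1.ne').tsum_eq.symm,
    integral_tsum_mul_pow (fun n => 2 * n)]
  · push_cast
    simp only [div_div, ← sq]
  · convert summable_one_div_two_mul_add_one_sq using 2 with n
    push_cast
    rw [abs_div, abs_pow, abs_neg, abs_one, one_pow, abs_of_pos (by positivity), div_div, ← sq]

theorem stmt_1 :
    ∫ θ in (0:ℝ)..(π/2), θ / Real.sin θ =
      2 * ∑' n : ℕ, (-1:ℝ)^n / (2*(n:ℝ)+1)^2 := by
  rw [integral_div_sin_eq_integral_arctan_div, intervalIntegral.integral_const_mul,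
    integral_arctan_div_self]
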